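/- For every multi-index β ∈ ℤ_+^d, there exist constants c_j^{|β|} ≥ 0 such that the function S_β(u, C) := e^{-(1/2)u^T C u} · ∂^β/∂u^β (e^{(1/2)u^T C u}) satisfies |S_β(u, C)| ≤ Σ_{j=0}^{|β|} c_j^{|β|} |u|^j |C|^{(j+|β|)/2} for all u ∈ ℝ^d and all symmetric d×d real matrices C, where |C| denotes a matrix norm and |β| = β_1 + ... + β_d. -/

import Mathlib

open scoped BigOperators Matrix

/-- Partial derivative in direction `i` of a function on `ℝ^d`. -/
noncomputable def partialDeriv {d : ℕ} (i : Fin d) (f : (Fin d → ℝ) → ℝ) :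
    (Fin d → ℝ) → ℝ :=
  fun u => fderiv ℝ f u (Pi.single i 1)

/-- Mixed partial derivative `∂^β/∂u^β` of multi-order `β`. -/
noncomputable def multiPartial {d : ℕ} (β : Fin d → ℕ) (f : (Fin d → ℝ) → ℝ) :
    (Fin d → ℝ) → ℝ :=
  (List.finRange d).foldr (fun i g => (partialDeriv i)^[β i] g) f

/-- Euclidean norm on `ℝ^d`. -/
noncomputable def euclNorm {d : ℕ} (u : Fin d → ℝ) : ℝ :=
  Real.sqrt (∑ i, (u i) ^ 2)

/-- Frobenius norm of a `d×d` real matrix. -/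
noncomputable def matNorm {d : ℕ} (C : Matrix (Fin d) (Fin d) ℝ) : ℝ :=
  Real.sqrt (∑ i, ∑ j, (C i j) ^ 2)

/-- `S_β(u,C) = e^{-(1/2)uᵀCu} ∂^β/∂u^β e^{(1/2)uᵀCu}`. -/
noncomputable def Sfun {d : ℕ} (β : Fin d → ℕ) (u : Fin d → ℝ)
    (C : Matrix (Fin d) (Fin d) ℝ) : ℝ :=
  Real.exp (-(1 / 2) * (u ⬝ᵥ C.mulVec u)) *
    multiPartial β (fun v => Real.exp ((1 / 2) * (v ⬝ᵥ C.mulVec v))) u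

/-!
Write `Q(u) = ½ uᵀCu`, so that `∂ₖ e^Q = (Cu)ₖ e^Q` for symmetric `C`. By induction
on `β`, `∂^β e^Q = p(Cu, C) e^Q` with `p` a polynomial in the entries of `Cu` and of `C`,
weighted homogeneous of degree `|β|` when `Cu` has weight `1` and `C` weight `2`:
differentiating `e^Q` contributes a factor `(Cu)ₖ`, and differentiating `(Cu)ᵢ` replaces it
by `Cᵢₖ`, each raising the weight by one. Hence `S_β(u, C) = p(Cu, C)`, and a monomial with
`a` factors `(Cu)ᵢ` and `b` entries of `C`, where `a + 2b = |β|`, is bounded by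
`|u|^a |C|^(a + b) = |u|^a |C|^((a + |β|)/2)`.
-/

open Real Finset

namespace GaussianDerivative

variable {d : ℕ}

section PartialDeriv

variable {f g : (Fin d → ℝ) → ℝ} {u : Fin d → ℝ}

lemma partialDeriv_add (k : Fin d) (hf : DifferentiableAt ℝ f u) (hg : DifferentiableAt ℝ g u) :
    partialDeriv k (fun v => f v + g v) u = partialDeriv k f u + partialDeriv k g u := by
  simp only [partialDeriv, fderiv_fun_add hf hg, add_apply]

lemma partialDeriv_const_mul (k : Fin d) (a : ℝ) (hf : DifferentiableAt ℝ f u) :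
    partialDeriv k (fun v => a * f v) u = a * partialDeriv k f u := by
  simp only [partialDeriv, fderiv_const_mul hf, smul_apply, smul_eq_mul]

lemma partialDeriv_mul (k : Fin d) (hf : DifferentiableAt ℝ f u) (hg : DifferentiableAt ℝ g u) :
    partialDeriv k (fun v => f v * g v) u =
      partialDeriv k f u * g u + f u * partialDeriv k g u := by
  simp only [partialDeriv, fderiv_fun_mul hf hg, add_apply, smul_apply, smul_eq_mul]
  ring

variable (C : Matrix (Fin d) (Fin d) ℝ)

lemma differentiable_mulVec_apply (i : Fin d) :
    Differentiable ℝ fun v : Fin d → ℝ => (C *ᵥ v) i := by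
  simp only [Matrix.mulVec, dotProduct]
  fun_prop

lemma differentiable_dotProduct_mulVec_self :
    Differentiable ℝ fun v : Fin d → ℝ => v ⬝ᵥ C *ᵥ v := by
  simp only [dotProduct, Matrix.mulVec]
  fun_prop

lemma partialDeriv_mulVec_apply (i k : Fin d) (u : Fin d → ℝ) :
    partialDeriv k (fun v => (C *ᵥ v) i) u = C i k := by
  have hlin : (fun v : Fin d → ℝ => (C *ᵥ v) i) =
      ⇑(LinearMap.proj i ∘ₗ C.mulVecLin).toContinuousLinearMap := rfl
  rw [partialDeriv, hlin, ContinuousLinearMap.fderiv]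
  simp

lemma partialDeriv_dotProduct_mulVec_self (k : Fin d) (u : Fin d → ℝ) :
    partialDeriv k (fun v => v ⬝ᵥ C *ᵥ v) u = (C *ᵥ u) k + (Cᵀ *ᵥ u) k := by
  let A : (Fin d → ℝ) →L[ℝ] (Fin d → ℝ) := C.mulVecLin.toContinuousLinearMap
  have hq : HasFDerivAt (fun v : Fin d → ℝ => ∑ i, v i * A v i)
      (∑ i, (u i • (ContinuousLinearMap.proj i).comp A + A u i • ContinuousLinearMap.proj i))
      u :=
    HasFDerivAt.fun_sum fun i _ =>
      (hasFDerivAt_apply i u).mul ((ContinuousLinearMap.proj i).comp A).hasFDerivAt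
  have hsum : (fun v : Fin d → ℝ => v ⬝ᵥ C *ᵥ v) = fun v => ∑ i, v i * A v i := rfl
  rw [partialDeriv, hsum, hq.fderiv]
  simp [A, Matrix.mulVec, dotProduct, Pi.single_apply, Finset.sum_add_distrib, mul_comm, add_comm]

end PartialDeriv

noncomputable def gaussian (C : Matrix (Fin d) (Fin d) ℝ) (v : Fin d → ℝ) : ℝ :=
  exp (1 / 2 * (v ⬝ᵥ C *ᵥ v))

section Gaussian

variable {C : Matrix (Fin d) (Fin d) ℝ}

lemma differentiable_gaussian : Differentiable ℝ (gaussian C) :=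
  ((differentiable_dotProduct_mulVec_self C).const_mul _).exp

lemma partialDeriv_gaussian (hC : C.IsSymm) (k : Fin d) (u : Fin d → ℝ) :
    partialDeriv k (gaussian C) u = (C *ᵥ u) k * gaussian C u := by
  have hq := differentiable_dotProduct_mulVec_self C u
  unfold partialDeriv gaussian
  rw [fderiv_exp (hq.const_mul _), smul_apply, fderiv_const_mul hq, smul_apply, ← partialDeriv,
    partialDeriv_dotProduct_mulVec_self, hC.eq, smul_eq_mul, smul_eq_mul]
  ring

end Gaussian

inductive IsWeightedPoly : ℕ → (Matrix (Fin d) (Fin d) ℝ → (Fin d → ℝ) → ℝ) → Prop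
  | const (a : ℝ) : IsWeightedPoly 0 fun _ _ => a
  | add {n : ℕ} {p q : Matrix (Fin d) (Fin d) ℝ → (Fin d → ℝ) → ℝ} :
      IsWeightedPoly n p → IsWeightedPoly n q → IsWeightedPoly n fun C u => p C u + q C u
  | mulVec_mul {n : ℕ} {p : Matrix (Fin d) (Fin d) ℝ → (Fin d → ℝ) → ℝ} (i : Fin d) :
      IsWeightedPoly n p → IsWeightedPoly (n + 1) fun C u => (C *ᵥ u) i * p C u
  | entry_mul {n : ℕ} {p : Matrix (Fin d) (Fin d) ℝ → (Fin d → ℝ) → ℝ} (i j : Fin d) :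
      IsWeightedPoly n p → IsWeightedPoly (n + 2) fun C u => C i j * p C u

namespace IsWeightedPoly

variable {n : ℕ} {p : Matrix (Fin d) (Fin d) ℝ → (Fin d → ℝ) → ℝ}

lemma differentiable (hp : IsWeightedPoly n p) (C : Matrix (Fin d) (Fin d) ℝ) :
    Differentiable ℝ (p C) := by
  induction hp with
  | const a => exact differentiable_const a
  | add _ _ ihp ihq => exact ihp.add ihq
  | mulVec_mul i _ ih => exact (differentiable_mulVec_apply C i).mul ih
  | entry_mul i j _ ih => exact ih.const_mul _

lemma differentiable_mul_gaussian (hp : IsWeightedPoly n p) (C : Matrix (Fin d) (Fin d) ℝ) :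
    Differentiable ℝ fun v => p C v * gaussian C v :=
  (hp.differentiable C).mul differentiable_gaussian

lemma partialDeriv_mul_gaussian (hp : IsWeightedPoly n p) (k : Fin d) :
    ∃ q, IsWeightedPoly (n + 1) q ∧ ∀ C : Matrix (Fin d) (Fin d) ℝ, C.IsSymm →
      partialDeriv k (fun v => p C v * gaussian C v) = fun v => q C v * gaussian C v := by
  induction hp with
  | const a =>
    refine ⟨_, (const a).mulVec_mul k, fun C hC => funext fun u => ?_⟩
    rw [partialDeriv_const_mul k a (differentiable_gaussian u), partialDeriv_gaussian hC]
    ring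
  | @add n p₁ p₂ hp₁ hp₂ ih₁ ih₂ =>
    obtain ⟨q₁, hq₁, hderiv₁⟩ := ih₁
    obtain ⟨q₂, hq₂, hderiv₂⟩ := ih₂
    refine ⟨_, hq₁.add hq₂, fun C hC => funext fun u => ?_⟩
    have hsplit : (fun v => (p₁ C v + p₂ C v) * gaussian C v) =
        fun v => p₁ C v * gaussian C v + p₂ C v * gaussian C v := by
      simp only [add_mul]
    rw [hsplit, partialDeriv_add k (hp₁.differentiable_mul_gaussian C u)
      (hp₂.differentiable_mul_gaussian C u), hderiv₁ C hC, hderiv₂ C hC]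
    ring
  | @mulVec_mul n p i hp ih =>
    obtain ⟨q, hq, hderiv⟩ := ih
    refine ⟨_, (hp.entry_mul i k).add (hq.mulVec_mul i), fun C hC => funext fun u => ?_⟩
    simp only [mul_assoc]
    rw [partialDeriv_mul k (differentiable_mulVec_apply C i u)
      (hp.differentiable_mul_gaussian C u), partialDeriv_mulVec_apply,
      hderiv C hC]
    ring
  | @entry_mul n p i j hp ih =>
    obtain ⟨q, hq, hderiv⟩ := ih
    refine ⟨_, hq.entry_mul i j, fun C hC => funext fun u => ?_⟩
    simp only [mul_assoc]
    rw [partialDeriv_const_mul k _ (hp.differentiable_mul_gaussian C u),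
      hderiv C hC]

end IsWeightedPoly

def HasWeightedPolyFactor (n : ℕ) (F : Matrix (Fin d) (Fin d) ℝ → (Fin d → ℝ) → ℝ) :
    Prop :=
  ∃ p, IsWeightedPoly n p ∧ ∀ C : Matrix (Fin d) (Fin d) ℝ, C.IsSymm →
    F C = fun v => p C v * gaussian C v

lemma hasWeightedPolyFactor_gaussian : HasWeightedPolyFactor 0 (gaussian (d := d)) :=
  ⟨_, .const 1, fun _ _ => funext fun _ => (one_mul _).symm⟩

namespace HasWeightedPolyFactor

variable {n : ℕ} {F : Matrix (Fin d) (Fin d) ℝ → (Fin d → ℝ) → ℝ}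

lemma partialDeriv (hF : HasWeightedPolyFactor n F) (k : Fin d) :
    HasWeightedPolyFactor (n + 1) fun C => partialDeriv k (F C) := by
  obtain ⟨p, hp, hFp⟩ := hF
  obtain ⟨q, hq, hderiv⟩ := hp.partialDeriv_mul_gaussian k
  exact ⟨q, hq, fun C hC => (congrArg _ (hFp C hC)).trans (hderiv C hC)⟩

lemma iterate_partialDeriv (hF : HasWeightedPolyFactor n F) (k : Fin d) (m : ℕ) :
    HasWeightedPolyFactor (n + m) fun C => (_root_.partialDeriv k)^[m] (F C) := by
  induction m with
  | zero => exact hF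
  | succ m ih =>
    simp only [Function.iterate_succ_apply']
    exact ih.partialDeriv k

lemma foldr_iterate_partialDeriv (hF : HasWeightedPolyFactor n F) (β : Fin d → ℕ)
    (l : List (Fin d)) :
    HasWeightedPolyFactor (n + (l.map β).sum)
      fun C => l.foldr (fun i g => (_root_.partialDeriv i)^[β i] g) (F C) := by
  induction l with
  | nil => exact hF
  | cons k l ih =>
    rw [List.map_cons, List.sum_cons, add_left_comm, add_comm]
    exact ih.iterate_partialDeriv k (β k)

lemma multiPartial_gaussian (β : Fin d → ℕ) :
    HasWeightedPolyFactor (∑ i, β i) fun C => multiPartial β (gaussian C) := by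
  have h := hasWeightedPolyFactor_gaussian.foldr_iterate_partialDeriv β (List.finRange d)
  rwa [zero_add, ← Fin.sum_univ_def] at h

end HasWeightedPolyFactor

section Norms

variable (C : Matrix (Fin d) (Fin d) ℝ)

lemma abs_apply_le_matNorm (i j : Fin d) : |C i j| ≤ matNorm C :=
  abs_le_sqrt <|
    (single_le_sum (f := fun j => C i j ^ 2) (fun _ _ => sq_nonneg _) (mem_univ j)).trans
    (single_le_sum (f := fun i => ∑ j, C i j ^ 2) (fun _ _ => sum_nonneg fun _ _ => sq_nonneg _)
      (mem_univ i))

lemma abs_mulVec_apply_le (u : Fin d → ℝ) (i : Fin d) :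
    |(C *ᵥ u) i| ≤ matNorm C * euclNorm u := by
  rw [matNorm, euclNorm, ← sqrt_mul' _ (sum_nonneg fun _ _ => sq_nonneg _)]
  refine abs_le_sqrt ?_
  calc ((C *ᵥ u) i) ^ 2 = (∑ j, C i j * u j) ^ 2 := rfl
    _ ≤ (∑ j, C i j ^ 2) * ∑ j, u j ^ 2 := sum_mul_sq_le_sq_mul_sq _ _ _
    _ ≤ (∑ i, ∑ j, C i j ^ 2) * ∑ j, u j ^ 2 :=
      mul_le_mul_of_nonneg_right
        (single_le_sum (f := fun i => ∑ j, C i j ^ 2)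
          (fun _ _ => sum_nonneg fun _ _ => sq_nonneg _) (mem_univ i))
        (sum_nonneg fun _ _ => sq_nonneg _)

lemma matNorm_nonneg : 0 ≤ matNorm C := sqrt_nonneg _

lemma matNorm_mul_rpow {x : ℝ} (hx : 0 ≤ x) :
    matNorm C * matNorm C ^ x = matNorm C ^ (x + 1) := by
  rw [rpow_add_one' (matNorm_nonneg C) (by linarith), mul_comm]

end Norms

noncomputable def weightedBound (n : ℕ) (c : ℕ → ℝ) (C : Matrix (Fin d) (Fin d) ℝ)
    (u : Fin d → ℝ) : ℝ :=
  ∑ j ∈ range (n + 1), c j * euclNorm u ^ j * matNorm C ^ (((j : ℝ) + n) / 2)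

section WeightedBound

variable {n : ℕ} {c : ℕ → ℝ} {C : Matrix (Fin d) (Fin d) ℝ} {u : Fin d → ℝ} {x : ℝ}

lemma abs_mulVec_apply_mul_le (i : Fin d) (hx : |x| ≤ weightedBound n c C u) :
    |(C *ᵥ u) i * x| ≤ weightedBound (n + 1) (fun j => if j = 0 then 0 else c (j - 1)) C u := by
  rw [weightedBound, sum_range_succ']
  simp only [Nat.add_one_ne_zero, if_false, if_true, add_tsub_cancel_right, zero_mul, add_zero]
  calc |(C *ᵥ u) i * x| = |(C *ᵥ u) i| * |x| := abs_mul _ _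
    _ ≤ (matNorm C * euclNorm u) * weightedBound n c C u :=
      mul_le_mul (abs_mulVec_apply_le C u i) hx (abs_nonneg _)
        (mul_nonneg (matNorm_nonneg C) (sqrt_nonneg _))
    _ = _ := by
      rw [weightedBound, mul_sum]
      refine sum_congr rfl fun j _ => ?_
      rw [show ((↑(j + 1) : ℝ) + ↑(n + 1)) / 2 = (j + n) / 2 + 1 by push_cast; ring,
        ← matNorm_mul_rpow C (by positivity)]
      ring

lemma abs_entry_mul_le (hc : ∀ j, 0 ≤ c j) (i j : Fin d) (hx : |x| ≤ weightedBound n c C u) :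
    |C i j * x| ≤ weightedBound (n + 2) c C u :=
  calc |C i j * x| = |C i j| * |x| := abs_mul _ _
    _ ≤ matNorm C * weightedBound n c C u :=
      mul_le_mul (abs_apply_le_matNorm C i j) hx (abs_nonneg _) (matNorm_nonneg C)
    _ = ∑ l ∈ range (n + 1),
          c l * euclNorm u ^ l * matNorm C ^ (((l : ℝ) + ↑(n + 2)) / 2) := by
      rw [weightedBound, mul_sum]
      refine sum_congr rfl fun l _ => ?_
      rw [show ((l : ℝ) + ↑(n + 2)) / 2 = (l + n) / 2 + 1 by push_cast; ring,
        ← matNorm_mul_rpow C (by positivity)]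
      ring
    _ ≤ _ := sum_le_sum_of_subset_of_nonneg (range_mono (by omega)) fun l _ _ =>
      mul_nonneg (mul_nonneg (hc l) (pow_nonneg (sqrt_nonneg _) l))
        (rpow_nonneg (matNorm_nonneg C) _)

end WeightedBound

lemma IsWeightedPoly.exists_abs_le {n : ℕ}
    {p : Matrix (Fin d) (Fin d) ℝ → (Fin d → ℝ) → ℝ} (hp : IsWeightedPoly n p) :
    ∃ c : ℕ → ℝ, (∀ j, 0 ≤ c j) ∧ ∀ C u, |p C u| ≤ weightedBound n c C u := by
  induction hp with
  | const a => exact ⟨fun _ => |a|, fun _ => abs_nonneg a, fun C u => by simp [weightedBound]⟩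
  | add _ _ ih₁ ih₂ =>
    obtain ⟨c₁, hc₁, hbound₁⟩ := ih₁
    obtain ⟨c₂, hc₂, hbound₂⟩ := ih₂
    refine ⟨c₁ + c₂, fun j => add_nonneg (hc₁ j) (hc₂ j), fun C u => ?_⟩
    simp only [weightedBound, Pi.add_apply, add_mul, sum_add_distrib]
    exact (abs_add_le _ _).trans (add_le_add (hbound₁ C u) (hbound₂ C u))
  | mulVec_mul i _ ih =>
    obtain ⟨c, hc, hbound⟩ := ih
    exact ⟨_, fun j => ite_nonneg le_rfl (hc _),
      fun C u => abs_mulVec_apply_mul_le i (hbound C u)⟩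
  | entry_mul i j _ ih =>
    obtain ⟨c, hc, hbound⟩ := ih
    exact ⟨c, hc, fun C u => abs_entry_mul_le hc i j (hbound C u)⟩

end GaussianDerivative

open GaussianDerivative in
theorem stmt4 {d : ℕ} (β : Fin d → ℕ) :
    ∃ c : ℕ → ℝ, (∀ j, 0 ≤ c j) ∧
      ∀ (u : Fin d → ℝ) (C : Matrix (Fin d) (Fin d) ℝ), C.IsSymm →
        |Sfun β u C| ≤ ∑ j ∈ Finset.range ((∑ i, β i) + 1),
          c j * euclNorm u ^ j *
            matNorm C ^ (((j : ℝ) + (∑ i, β i : ℕ)) / 2) := by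
  obtain ⟨p, hp, hderiv⟩ := HasWeightedPolyFactor.multiPartial_gaussian β
  obtain ⟨c, hc, hbound⟩ := hp.exists_abs_le
  refine ⟨c, hc, fun u C hC => ?_⟩
  have hmultiPartial : multiPartial β (fun v => Real.exp (1 / 2 * (v ⬝ᵥ C *ᵥ v))) =
      fun v => p C v * gaussian C v := hderiv C hC
  have hSfun : Sfun β u C = p C u := by
    rw [Sfun, hmultiPartial]
    beta_reduce
    rw [gaussian, neg_mul, Real.exp_neg, mul_comm (p C u),
      inv_mul_cancel_left₀ (Real.exp_pos _).ne']
  exact hSfun ▸ hbound C u
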